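/- Two quadratic forms q, q' ∈ Q(V) on a symplectic F_2-vector space V = F_2^{2g} have the same Arf invariant if and only if there exists T ∈ Sp(V) with q' = T·q, where (T·q)(x) = q(T^{-1}x). That is, the Sp(V)-action on Q(V) has exactly two orbits, Q(V)^+ = {arf = 0} and Q(V)^- = {arf = 1}. -/

import Mathlib

/-- `F₂^{2g}` as `F₂^g × F₂^g`. -/
abbrev V (g : ℕ) := (Fin g → ZMod 2) × (Fin g → ZMod 2)

/-- The standard symplectic form `⟨(x,y),(x',y')⟩ = x·y' + x'·y` on `F₂^{2g}`. -/
def B {g : ℕ} (u v : V g) : ZMod 2 := ∑ i, u.1 i * v.2 i + ∑ i, v.1 i * u.2 i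

/-- Quadratic forms with polarity the standard symplectic form. -/
def IsQuad {g : ℕ} (q : V g → ZMod 2) : Prop :=
  ∀ u v, q (u + v) = q u + q v + B u v

/-- The Arf invariant with respect to the standard symplectic basis. -/
def arf {g : ℕ} (q : V g → ZMod 2) : ZMod 2 :=
  ∑ i, q (Pi.single i 1, 0) * q (0, Pi.single i 1)

/-!
If `q` and `q'` both have polarity `B`, then `q + q'` is additive, so `q' = q + B(·, d)` for the
vector `d` whose coordinates are the differences of the values of `q` and `q'` on the standard
symplectic basis, and a coordinate computation gives `q d = arf q + arf q'`. When the Arf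
invariants agree, `d` is therefore singular for `q`, and the symplectic transvection
`x ↦ x + B(x, d) d` carries `q` to `q'`.

Conversely, splitting `V` into hyperbolic planes gives `∑ₓ (-1)^(q x) = 2^g (-1)^(arf q)`, and
the left-hand side is unchanged when `q` is precomposed with any bijection.
-/

open Finset

namespace LinearMap.BilinForm

variable {R M : Type*} [CommRing R] [AddCommGroup M] [Module R M]
  {b : LinearMap.BilinForm R M} {v : M}

def transvection (b : LinearMap.BilinForm R M) {v : M} (hv : b v v = 0) : M ≃ₗ[R] M where
  toFun x := x + b x v • v
  invFun x := x - b x v • v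
  map_add' x y := by simp only [map_add, LinearMap.add_apply, add_smul]; abel
  map_smul' c x := by simp [smul_add, mul_smul]
  left_inv x := by simp [hv]
  right_inv x := by simp [hv]

theorem transvection_apply (hv : b v v = 0) (x : M) : transvection b hv x = x + b x v • v := rfl

theorem IsAlt.apply_transvection_transvection (hb : b.IsAlt) (hv : b v v = 0) (x y : M) :
    b (transvection b hv x) (transvection b hv y) = b x y := by
  simp only [transvection_apply, map_add, map_smul, LinearMap.add_apply, LinearMap.smul_apply,
    smul_eq_mul, hv, mul_zero, add_zero, ← hb.neg_eq v y]
  ring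

end LinearMap.BilinForm

open LinearMap.BilinForm

section HasPolar

variable {R M : Type*} [CommRing R] [AddCommGroup M] [Module R M]

def HasPolar (q : M → R) (b : LinearMap.BilinForm R M) : Prop :=
  ∀ u v, q (u + v) = q u + q v + b u v

variable {q : M → R} {b : LinearMap.BilinForm R M}

theorem HasPolar.map_zero (hq : HasPolar q b) : q 0 = 0 := by
  simpa using hq 0 0

theorem HasPolar.map_sum_of_pairwise (hq : HasPolar q b) {ι : Type*} (s : Finset ι) {f : ι → M}
    (hf : Pairwise fun i j => b (f i) (f j) = 0) : q (∑ i ∈ s, f i) = ∑ i ∈ s, q (f i) := by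
  induction s using Finset.cons_induction with
  | empty => simpa using hq.map_zero
  | cons j s hj ih =>
    have horth : b (f j) (∑ i ∈ s, f i) = 0 := by
      rw [map_sum]
      exact Finset.sum_eq_zero fun i hi => hf (ne_of_mem_of_not_mem hi hj).symm
    rw [sum_cons, sum_cons, hq, ih, horth, add_zero]

end HasPolar

section CharTwo

theorem ZMod.eq_zero_or_eq_one (c : ZMod 2) : c = 0 ∨ c = 1 := by decide +revert

variable {M : Type*} [AddCommGroup M] [Module (ZMod 2) M] {q : M → ZMod 2}
  {b : LinearMap.BilinForm (ZMod 2) M}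

theorem HasPolar.map_smul (hq : HasPolar q b) (c : ZMod 2) (v : M) : q (c • v) = c * q v := by
  rcases ZMod.eq_zero_or_eq_one c with rfl | rfl <;> simp [hq.map_zero]

theorem HasPolar.apply_transvection (hq : HasPolar q b) {v : M} (hv : b v v = 0) (x : M) :
    q (transvection b hv x) = q x + b x v * (q v + 1) := by
  have hidem : b x v * b x v = b x v := by
    rcases ZMod.eq_zero_or_eq_one (b x v) with h | h <;> simp [h]
  rw [transvection_apply, hq, hq.map_smul, smul_right, hidem]
  ring

end CharTwo

variable {g : ℕ}

def stdSymplecticForm (g : ℕ) : LinearMap.BilinForm (ZMod 2) (V g) :=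
  LinearMap.mk₂ (ZMod 2) B
    (fun u u' v => by
      simp only [B, Prod.fst_add, Prod.snd_add, Pi.add_apply, add_mul, mul_add, sum_add_distrib]
      ring)
    (fun c u v => by
      simp only [B, Prod.smul_fst, Prod.smul_snd, Pi.smul_apply, smul_eq_mul, mul_add, mul_sum]
      congr 1 <;> exact sum_congr rfl fun _ _ => by ring)
    (fun u v v' => by
      simp only [B, Prod.fst_add, Prod.snd_add, Pi.add_apply, add_mul, mul_add, sum_add_distrib]
      ring)
    (fun c u v => by
      simp only [B, Prod.smul_fst, Prod.smul_snd, Pi.smul_apply, smul_eq_mul, mul_add, mul_sum]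
      congr 1 <;> exact sum_congr rfl fun _ _ => by ring)

@[simp]
theorem stdSymplecticForm_apply (u v : V g) : stdSymplecticForm g u v = B u v := rfl

theorem stdSymplecticForm_isAlt : (stdSymplecticForm g).IsAlt := fun _ =>
  CharTwo.add_self_eq_zero _

theorem IsQuad.hasPolar {q : V g → ZMod 2} (hq : IsQuad q) : HasPolar q (stdSymplecticForm g) :=
  hq

theorem B_single_single_of_ne {i j : Fin g} (hij : i ≠ j) (a b c d : ZMod 2) :
    B (Pi.single i a, Pi.single i b) (Pi.single j c, Pi.single j d) = 0 := by
  simp [B, Pi.single_apply, hij, hij.symm]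

theorem sum_single_single (x : V g) :
    ∑ i, ((Pi.single i (x.1 i), Pi.single i (x.2 i)) : V g) = x := by
  ext <;> simp [Prod.fst_sum, Prod.snd_sum]

/-- The vector `d` with `q' = q + B(·, d)` (for `q`, `q'` of polarity `B`). -/
def polarDiff (q q' : V g → ZMod 2) : V g :=
  (fun i => q (0, Pi.single i 1) + q' (0, Pi.single i 1),
    fun i => q (Pi.single i 1, 0) + q' (Pi.single i 1, 0))

namespace IsQuad

variable {q q' : V g → ZMod 2}

theorem apply_single_single (hq : IsQuad q) (i : Fin g) (a b : ZMod 2) :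
    q (Pi.single i a, Pi.single i b) =
      a * q (Pi.single i 1, 0) + b * q (0, Pi.single i 1) + a * b := by
  have hsplit : ((Pi.single i a, Pi.single i b) : V g) =
      a • ((Pi.single i 1, 0) : V g) + b • ((0, Pi.single i 1) : V g) := by
    ext <;> simp [← Pi.single_smul]
  have hB : B ((Pi.single i 1, 0) : V g) (0, Pi.single i 1) = 1 := by
    simp [B, Pi.single_apply]
  rw [hsplit, hq, hq.hasPolar.map_smul, hq.hasPolar.map_smul, ← stdSymplecticForm_apply,
    smul_left, smul_right, stdSymplecticForm_apply, hB, mul_one]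

theorem apply_eq_sum (hq : IsQuad q) (x : V g) :
    q x = ∑ i,
      (x.1 i * q (Pi.single i 1, 0) + x.2 i * q (0, Pi.single i 1) + x.1 i * x.2 i) := by
  conv_lhs => rw [← sum_single_single x]
  rw [hq.hasPolar.map_sum_of_pairwise _ fun i j hij => B_single_single_of_ne hij _ _ _ _]
  exact sum_congr rfl fun i _ => hq.apply_single_single i _ _

theorem apply_eq_add_B_polarDiff (hq : IsQuad q) (hq' : IsQuad q') (x : V g) :
    q' x = q x + B x (polarDiff q q') := by
  rw [hq.apply_eq_sum, hq'.apply_eq_sum, B, ← sum_add_distrib, ← sum_add_distrib]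
  refine sum_congr rfl fun i _ => ?_
  simp only [polarDiff]
  grind

theorem apply_polarDiff (hq : IsQuad q) :
    q (polarDiff q q') = arf q + arf q' := by
  rw [hq.apply_eq_sum, arf, arf, ← sum_add_distrib]
  refine sum_congr rfl fun i _ => ?_
  simp only [polarDiff]
  grind

end IsQuad

def signChar (a : ZMod 2) : ℤ := if a = 0 then 1 else -1

theorem signChar_add (a b : ZMod 2) : signChar (a + b) = signChar a * signChar b := by
  decide +revert

theorem signChar_injective : Function.Injective signChar := by
  intro a b
  decide +revert

theorem signChar_sum {ι : Type*} (s : Finset ι) (f : ι → ZMod 2) :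
    signChar (∑ i ∈ s, f i) = ∏ i ∈ s, signChar (f i) := by
  induction s using Finset.cons_induction with
  | empty => rfl
  | cons j s hj ih => rw [sum_cons, prod_cons, signChar_add, ih]

theorem sum_signChar_hyperbolic (a b : ZMod 2) :
    ∑ p : ZMod 2 × ZMod 2, signChar (p.1 * a + p.2 * b + p.1 * p.2) = 2 * signChar (a * b) := by
  decide +revert

theorem sum_prod_arrow_eq_prod_sum {ι α β R : Type*} [Fintype ι] [DecidableEq ι] [Fintype α]
    [Fintype β] [CommSemiring R] (f : ι → α × β → R) :
    ∑ x : (ι → α) × (ι → β), ∏ i, f i (x.1 i, x.2 i) = ∏ i, ∑ p, f i p := by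
  rw [Fintype.prod_sum]
  exact Fintype.sum_equiv (Equiv.arrowProdEquivProdArrow ι (fun _ => α) (fun _ => β)).symm _ _
    fun _ => rfl

namespace IsQuad

variable {q q' : V g → ZMod 2}

theorem sum_signChar (hq : IsQuad q) : ∑ x, signChar (q x) = 2 ^ g * signChar (arf q) := by
  have hfactor : ∀ x : V g, signChar (q x) = ∏ i, signChar
      (x.1 i * q (Pi.single i 1, 0) + x.2 i * q (0, Pi.single i 1) + x.1 i * x.2 i) := fun x => by
    rw [hq.apply_eq_sum x, signChar_sum]
  simp only [hfactor, sum_prod_arrow_eq_prod_sum fun i p => signChar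
      (p.1 * q (Pi.single i 1, 0) + p.2 * q (0, Pi.single i 1) + p.1 * p.2),
    sum_signChar_hyperbolic, prod_mul_distrib, prod_const, card_univ, Fintype.card_fin, arf,
    signChar_sum]

theorem arf_eq_of_eq_comp (hq : IsQuad q) (hq' : IsQuad q') (T : V g ≃ V g)
    (hT : ∀ x, q' x = q (T x)) : arf q = arf q' := by
  apply signChar_injective
  apply mul_left_cancel₀ (pow_ne_zero g two_ne_zero)
  rw [← hq.sum_signChar, ← hq'.sum_signChar, funext hT]
  exact (T.sum_comp fun x => signChar (q x)).symm

end IsQuad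

theorem two_orbits_of_symplectic_group (g : ℕ)
    (q q' : V g → ZMod 2) (hq : IsQuad q) (hq' : IsQuad q') :
    arf q = arf q' ↔
      ∃ T : V g ≃ₗ[ZMod 2] V g,
        (∀ u v : V g, B (T u) (T v) = B u v) ∧ ∀ x, q' x = q (T.symm x) := by
  constructor
  · intro h
    have hd : q (polarDiff q q') = 0 := by
      rw [hq.apply_polarDiff, h, CharTwo.add_self_eq_zero]
    have hiso := stdSymplecticForm_isAlt.self_eq_zero (polarDiff q q')
    refine ⟨(transvection _ hiso).symm, fun u v => ?_, fun x => ?_⟩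
    · simpa using (stdSymplecticForm_isAlt.apply_transvection_transvection hiso
        ((transvection _ hiso).symm u) ((transvection _ hiso).symm v)).symm
    · rw [LinearEquiv.symm_symm, hq.hasPolar.apply_transvection, hd, zero_add, mul_one,
        stdSymplecticForm_apply, ← hq.apply_eq_add_B_polarDiff hq']
  · rintro ⟨T, -, hT⟩
    exact hq.arf_eq_of_eq_comp hq' T.symm.toEquiv hT
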